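/- arXiv:math/0411379 — 6 statements merged into one kernel-verified Lean document; each statement's English description precedes it below -/
import Mathlib

section
/- The pair m = (m⁰, m¹) defined by m⁰(w) = w(n) for w ∈ E(nk)⁰ and m¹(e,w) = (e, w(n)) for (e,w) ∈ E(nk)¹ is a factor map from E(nk) to E(n): it intertwines the source maps, intertwines the range maps, and for every edge (e,w') ∈ E(n)¹ and vertex w₁ ∈ E(nk)⁰ with s(e,w') = m⁰(w₁), there is a unique edge f ∈ E(nk)¹ with m¹(f) = (e,w') and s(f) = w₁. -/
/-- A directed graph: vertices, edges, source and range maps. -/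
structure DirGraph where
  V : Type
  E : Type
  s : E → V
  r : E → V

namespace DirGraph

/-- `G.IsPathFrom x l` : the list of edges `l` (in walking order) forms a
path starting at the vertex `x`. -/
def IsPathFrom (G : DirGraph) : G.V → List G.E → Prop
  | _, [] => True
  | x, e :: es => G.s e = x ∧ G.IsPathFrom (G.r e) es

/-- The vertex reached after walking the edges `l` starting at `x`. -/
def endAt (G : DirGraph) : G.V → List G.E → G.V
  | x, [] => x
  | _, e :: es => G.endAt (G.r e) es

/-- A finite path in `G`: a source vertex together with a composable list of
edges (in walking order).  Vertices are the paths with no edges. -/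
structure Path (G : DirGraph) where
  src : G.V
  edges : List G.E
  valid : G.IsPathFrom src edges

namespace Path

variable {G : DirGraph}

/-- The range (final vertex) of a path. -/
def rng (p : G.Path) : G.V := G.endAt p.src p.edges

/-- The length of a path. -/
def length (p : G.Path) : ℕ := p.edges.length

/-- The trivial path at a vertex. -/
def nil (x : G.V) : G.Path := ⟨x, [], trivial⟩

end Path

variable {G : DirGraph}

theorem isPathFrom_append :
    ∀ (l₁ l₂ : List G.E) (x : G.V), G.IsPathFrom x l₁ →
      G.IsPathFrom (G.endAt x l₁) l₂ → G.IsPathFrom x (l₁ ++ l₂)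
  | [], _, _, _, h₂ => h₂
  | e :: es, l₂, _, h₁, h₂ => ⟨h₁.1, isPathFrom_append es l₂ (G.r e) h₁.2 h₂⟩

theorem endAt_append :
    ∀ (l₁ l₂ : List G.E) (x : G.V), G.endAt x (l₁ ++ l₂) = G.endAt (G.endAt x l₁) l₂
  | [], _, _ => rfl
  | e :: es, l₂, x => endAt_append es l₂ (G.r e)

theorem isPathFrom_take_drop :
    ∀ (l : List G.E) (k : ℕ) (x : G.V), G.IsPathFrom x l →
      G.IsPathFrom (G.endAt x (l.take k)) (l.drop k)
  | [], k, _, h => by cases k <;> exact h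
  | _ :: _, 0, _, h => h
  | e :: es, k + 1, x, h => isPathFrom_take_drop es k (G.r e) h.2

/-- Extend a path by one more edge at its end (`p.cons e` is the path `e·p`). -/
def Path.cons (p : G.Path) (e : G.E) (h : G.s e = p.rng) : G.Path :=
  ⟨p.src, p.edges ++ [e], isPathFrom_append p.edges [e] p.src p.valid ⟨h, trivial⟩⟩

@[simp] theorem Path.cons_length (p : G.Path) (e : G.E) (h : G.s e = p.rng) :
    (p.cons e h).length = p.length + 1 := by
  simp [Path.cons, Path.length]

/-- The remainder `w(n)` of a path modulo `n`: the final segment of length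
`|w| % n` (the part of `w` walked last). -/
def Path.rem (p : G.Path) (n : ℕ) : G.Path :=
  ⟨G.endAt p.src (p.edges.take (p.length - p.length % n)),
   p.edges.drop (p.length - p.length % n),
   isPathFrom_take_drop p.edges _ p.src p.valid⟩

theorem Path.rem_length (p : G.Path) (n : ℕ) : (p.rem n).length = p.length % n := by
  show (p.edges.drop (p.length - p.length % n)).length = _
  rw [List.length_drop]
  exact Nat.sub_sub_self (Nat.mod_le _ _)

theorem Path.rem_rng (p : G.Path) (n : ℕ) : (p.rem n).rng = p.rng := by
  show G.endAt (G.endAt p.src (p.edges.take (p.length - p.length % n)))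
      (p.edges.drop (p.length - p.length % n)) = _
  rw [← endAt_append, List.take_append_drop]
  rfl

/-- The graph `E(n)`: vertices are paths of length `< n` in `G`, edges are
pairs `(e, w)` with `s(e) = r(w)`; `s(e,w) = w` and `r(e,w) = ew` if
`|w| < n - 1`, and `r(e,w) = r(e)` if `|w| = n - 1`. -/
def graphN (G : DirGraph) (n : ℕ) : DirGraph where
  V := {w : G.Path // w.length < n}
  E := {p : G.E × G.Path // p.2.length < n ∧ G.s p.1 = p.2.rng}
  s := fun f => ⟨f.val.2, f.prop.1⟩
  r := fun f =>
    if h : f.val.2.length + 1 < n then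
      ⟨f.val.2.cons f.val.1 f.prop.2, by simpa using h⟩
    else
      ⟨Path.nil (G.r f.val.1), by
        have := f.prop.1
        simp only [Path.nil, Path.length, List.length_nil]
        omega⟩

/-- A factor map between (finite) directed graphs. -/
structure FactorMap (F E : DirGraph) where
  m0 : F.V → E.V
  m1 : F.E → E.E
  src_eq : ∀ f, E.s (m1 f) = m0 (F.s f)
  rng_eq : ∀ f, E.r (m1 f) = m0 (F.r f)
  lift : ∀ (e' : E.E) (v : F.V), E.s e' = m0 v →
    ∃! f : F.E, m1 f = e' ∧ F.s f = v

/-- The simple loop (cycle) digraph with `j` vertices. -/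
def cyc (j : ℕ) : DirGraph where
  V := ZMod j
  E := ZMod j
  s := id
  r := fun i => i + 1

end DirGraph

open DirGraph

/-- The vertex map of the factor map `E(nk) → E(n)`: `m⁰(w) = w(n)`. -/
def factorV (G : DirGraph) (n k : ℕ) (hn : 0 < n) (w : (graphN G (n * k)).V) :
    (graphN G n).V :=
  ⟨w.val.rem n, by rw [Path.rem_length]; exact Nat.mod_lt _ hn⟩

/-- The edge map of the factor map `E(nk) → E(n)`: `m¹(e,w) = (e, w(n))`. -/
def factorE (G : DirGraph) (n k : ℕ) (hn : 0 < n) (f : (graphN G (n * k)).E) :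
    (graphN G n).E :=
  ⟨(f.val.1, f.val.2.rem n),
    ⟨by rw [Path.rem_length]; exact Nat.mod_lt _ hn,
     by rw [Path.rem_rng]; exact f.prop.2⟩⟩

theorem pathExt {G : DirGraph} (p q : G.Path) (h1 : p.src = q.src)
    (h2 : p.edges = q.edges) : p = q := by
  cases p; cases q; simp_all

theorem rem_cons {G : DirGraph} (p : G.Path) (e : G.E) (h : G.s e = p.rng) (n : ℕ)
    (hlt : p.length % n + 1 < n) :
    (p.cons e h).rem n = (p.rem n).cons e (by rw [Path.rem_rng]; exact h) := by
  have h1n : 1 % n = 1 := Nat.mod_eq_of_lt (by omega)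
  have hmod : (p.length + 1) % n = p.length % n + 1 := by
    rw [Nat.add_mod, h1n, Nat.mod_eq_of_lt hlt]
  have hsub : p.length + 1 - (p.length + 1) % n = p.length - p.length % n := by omega
  have hle : p.length - p.length % n ≤ p.length := Nat.sub_le _ _
  apply pathExt
  · show G.endAt p.src ((p.edges ++ [e]).take ((p.cons e h).length - (p.cons e h).length % n)) = _
    rw [Path.cons_length, hsub, List.take_append_of_le_length (by simpa [Path.length] using hle)]
    rfl
  · show (p.edges ++ [e]).drop ((p.cons e h).length - (p.cons e h).length % n) = _
    rw [Path.cons_length, hsub, List.drop_append_of_le_length (by simpa [Path.length] using hle)]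
    rfl

theorem rem_cons_zero {G : DirGraph} (p : G.Path) (e : G.E) (h : G.s e = p.rng) (n : ℕ)
    (hn : 0 < n) (heq : p.length % n + 1 = n) :
    (p.cons e h).rem n = Path.nil (G.r e) := by
  have hmod : (p.length + 1) % n = 0 := by
    rcases Nat.lt_or_ge n 2 with h | h
    · have : n = 1 := by omega
      simp [this, Nat.mod_one]
    · rw [Nat.add_mod, Nat.mod_eq_of_lt h, heq, Nat.mod_self]
  have hlen : (p.edges ++ [e]).length = p.length + 1 := by simp [Path.length]
  apply pathExt
  · show G.endAt p.src ((p.edges ++ [e]).take ((p.cons e h).length - (p.cons e h).length % n)) = _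
    rw [Path.cons_length, hmod, Nat.sub_zero, List.take_of_length_le (le_of_eq hlen),
      endAt_append]
    have : G.endAt p.src p.edges = p.rng := rfl
    rw [this]
    rfl
  · show (p.edges ++ [e]).drop ((p.cons e h).length - (p.cons e h).length % n) = _
    rw [Path.cons_length, hmod, Nat.sub_zero, List.drop_of_length_le (le_of_eq hlen)]
    rfl

theorem rem_nil {G : DirGraph} (x : G.V) (n : ℕ) : (Path.nil x).rem n = Path.nil x := rfl

/-- The pair `(m⁰, m¹)`, `m⁰(w) = w(n)`, `m¹(e,w) = (e,w(n))`,
is a factor map from `E(nk)` to `E(n)`: it intertwines sources and ranges, and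
has the unique edge-lifting property. -/
theorem stmt6 (G : DirGraph) (n k : ℕ) (hn : 0 < n) (hk : 0 < k) :
    (∀ f : (graphN G (n * k)).E,
      (graphN G n).s (factorE G n k hn f) = factorV G n k hn ((graphN G (n * k)).s f)) ∧
    (∀ f : (graphN G (n * k)).E,
      (graphN G n).r (factorE G n k hn f) = factorV G n k hn ((graphN G (n * k)).r f)) ∧
    (∀ (e' : (graphN G n).E) (v : (graphN G (n * k)).V),
      (graphN G n).s e' = factorV G n k hn v →
      ∃! f : (graphN G (n * k)).E,
        factorE G n k hn f = e' ∧ (graphN G (n * k)).s f = v) := by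
  refine ⟨fun f => rfl, ?_, ?_⟩
  · intro f
    obtain ⟨⟨e, v⟩, hv, hse⟩ := f
    by_cases h1 : v.length + 1 < n * k
    · have hr : (graphN G (n * k)).r ⟨(e, v), hv, hse⟩
          = ⟨v.cons e hse, by simpa using h1⟩ := dif_pos h1
      rw [hr]
      by_cases h2 : v.length % n + 1 < n
      · have h2' : (v.rem n).length + 1 < n := by rwa [Path.rem_length]
        have hl : (graphN G n).r (factorE G n k hn ⟨(e, v), hv, hse⟩)
            = ⟨(v.rem n).cons e (by rw [Path.rem_rng]; exact hse), by simpa using h2'⟩ :=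
          dif_pos h2'
        rw [hl]
        apply Subtype.ext
        exact (rem_cons v e hse n h2).symm
      · have h2' : ¬ ((v.rem n).length + 1 < n) := by rwa [Path.rem_length]
        have hl : (graphN G n).r (factorE G n k hn ⟨(e, v), hv, hse⟩)
            = ⟨Path.nil (G.r e), by simp [Path.nil, Path.length]; omega⟩ := dif_neg h2'
        rw [hl]
        apply Subtype.ext
        have heq : v.length % n + 1 = n := by
          have := Nat.mod_lt v.length hn
          omega
        exact (rem_cons_zero v e hse n hn heq).symm
    · have hr : (graphN G (n * k)).r ⟨(e, v), hv, hse⟩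
          = ⟨Path.nil (G.r e), by simp only [Path.nil, Path.length, List.length_nil]; exact Nat.mul_pos hn hk⟩ := dif_neg h1
      rw [hr]
      have h2' : ¬ ((v.rem n).length + 1 < n) := by
        rw [Path.rem_length]
        obtain ⟨k', rfl⟩ : ∃ k', k = k' + 1 := ⟨k - 1, by omega⟩
        have hv' : v.length < n * (k' + 1) := hv
        have hL : v.length = n * k' + (n - 1) := by
          have h' : n * (k' + 1) = n * k' + n := by ring
          omega
        have : v.length % n = n - 1 := by
          rw [hL, Nat.mul_add_mod, Nat.mod_eq_of_lt (by omega)]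
        omega
      have hl : (graphN G n).r (factorE G n k hn ⟨(e, v), hv, hse⟩)
          = ⟨Path.nil (G.r e), by simp [Path.nil, Path.length]; omega⟩ := dif_neg h2'
      rw [hl]
      apply Subtype.ext
      exact (rem_nil (G.r e) n).symm
  · rintro ⟨⟨e, w'⟩, hw', hse⟩ v hsv
    have hw : w' = v.val.rem n := congrArg Subtype.val hsv
    subst hw
    refine ⟨⟨(e, v.val), v.prop, by rwa [Path.rem_rng] at hse⟩, ⟨rfl, rfl⟩, ?_⟩
    rintro ⟨⟨e₂, v₂⟩, hv₂, hse₂⟩ ⟨hfe, hfs⟩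
    have h2 : v₂ = v.val := congrArg Subtype.val hfs
    have h1 : e₂ = e := congrArg (fun x => x.val.1) hfe
    subst h1; subst h2
    rfl
end

section
/- For the cycle graph C_j and integer n ≥ 1, the graph C_j(n) is a disjoint union of exactly l = gcd(j, n) simple loops, each of length p = lcm(j, n) = jn/l. -/
/-! A vertex of `C_j(n)` is a path of length `< n` in `C_j`, determined by its range and its
length, so these two coordinates identify the vertices with `ZMod j × ZMod n`. Each vertex `w` has
exactly one outgoing edge `(r(w), w)`, and following it adds `(1, 1)` to the coordinates (at
length `n - 1` the length wraps around to `0`). Hence the successor map is the translation by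
`(1, 1)`, all of whose orbits have size `addOrderOf (1, 1) = lcm(j, n)`, and there are
`j * n = gcd(j, n) * lcm(j, n)` vertices. -/

theorem Function.Semiconj.iterate_eq_self_iff_nsmul_eq_zero {α M : Type*} [AddLeftCancelMonoid M]
    {f : α → M} (hf : f.Injective) {g : α → α} {a : M} (h : Function.Semiconj f g (· + a))
    (t : ℕ) (v : α) : g^[t] v = v ↔ t • a = 0 := by
  rw [← hf.eq_iff, h.iterate_right t v, add_right_iterate_apply, add_eq_left]

namespace DirGraph

theorem Path.cons_rng {G : DirGraph} (p : G.Path) (e : G.E) (h : G.s e = p.rng) :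
    (p.cons e h).rng = G.r e := by
  show G.endAt p.src (p.edges ++ [e]) = G.r e
  rw [endAt_append]
  rfl

section graphN

variable {G : DirGraph} {n : ℕ}

theorem graphN_r_rng (f : (graphN G n).E) : ((graphN G n).r f).val.rng = G.r f.val.1 := by
  simp only [graphN]
  split
  · exact Path.cons_rng _ _ f.prop.2
  · rfl

theorem graphN_r_length (f : (graphN G n).E) :
    ((graphN G n).r f).val.length = (f.val.2.length + 1) % n := by
  have hf := f.prop.1
  simp only [graphN]
  split
  · rw [Path.cons_length, Nat.mod_eq_of_lt ‹_›]
  · rw [show f.val.2.length + 1 = n by omega, Nat.mod_self]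
    rfl

end graphN

namespace cyc

variable {j : ℕ}

def edgesFrom : ZMod j → ℕ → List (ZMod j)
  | _, 0 => []
  | x, k + 1 => x :: edgesFrom (x + 1) k

@[simp] theorem length_edgesFrom : ∀ (x : ZMod j) (k : ℕ), (edgesFrom x k).length = k
  | _, 0 => rfl
  | x, k + 1 => congrArg (· + 1) (length_edgesFrom (x + 1) k)

theorem isPathFrom_edgesFrom : ∀ (x : ZMod j) (k : ℕ), (cyc j).IsPathFrom x (edgesFrom x k)
  | _, 0 => trivial
  | x, k + 1 => ⟨rfl, isPathFrom_edgesFrom (x + 1) k⟩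

theorem endAt_edgesFrom :
    ∀ (x : ZMod j) (k : ℕ), (cyc j).endAt x (edgesFrom x k) = x + (k : ZMod j)
  | x, 0 => (by simp : x = x + ((0 : ℕ) : ZMod j))
  | x, k + 1 => (endAt_edgesFrom (x + 1) k).trans
      (by push_cast; ring : x + 1 + (k : ZMod j) = x + ((k + 1 : ℕ) : ZMod j))

theorem eq_edgesFrom_of_isPathFrom : ∀ (x : ZMod j) (l : List (ZMod j)),
    (cyc j).IsPathFrom x l → l = edgesFrom x l.length
  | _, [], _ => rfl
  | x, e :: es, ⟨he, hes⟩ => by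
    obtain rfl : e = x := he
    exact congrArg (e :: ·) (eq_edgesFrom_of_isPathFrom (e + 1) es hes)

def path (x : ZMod j) (k : ℕ) : (cyc j).Path := ⟨x, edgesFrom x k, isPathFrom_edgesFrom x k⟩

@[simp] theorem length_path (x : ZMod j) (k : ℕ) : (path x k).length = k :=
  length_edgesFrom x k

theorem rng_path (x : ZMod j) (k : ℕ) : (path x k).rng = x + (k : ZMod j) :=
  endAt_edgesFrom x k

theorem eq_path (p : (cyc j).Path) : p = path p.src p.length := by
  obtain ⟨x, l, hl⟩ := p
  exact (Path.mk.injEq ..).mpr ⟨rfl, eq_edgesFrom_of_isPathFrom x l hl⟩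

end cyc

namespace graphN

variable (j n : ℕ)

def cycOutEdge (v : (graphN (cyc j) n).V) : (graphN (cyc j) n).E :=
  ⟨(v.val.rng, v.val), v.prop, rfl⟩

variable {j n}

theorem eq_cycOutEdge (f : (graphN (cyc j) n).E) : f = cycOutEdge j n ((graphN (cyc j) n).s f) :=
  Subtype.ext (Prod.ext f.prop.2 rfl)

theorem existsUnique_s_eq_cyc (v : (graphN (cyc j) n).V) :
    ∃! f : (graphN (cyc j) n).E, (graphN (cyc j) n).s f = v :=
  ⟨cycOutEdge j n v, rfl, fun f hf => hf ▸ eq_cycOutEdge f⟩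

variable (j n) [NeZero n]

def cycEquiv : (graphN (cyc j) n).V ≃ ZMod j × ZMod n where
  toFun v := (v.val.rng, v.val.length)
  invFun x := ⟨cyc.path (x.1 - x.2.val) x.2.val, by simpa using x.2.val_lt⟩
  left_inv v := by
    have hlen : ((v.val.length : ZMod n)).val = v.val.length := ZMod.val_natCast_of_lt v.prop
    have hrng := (congrArg Path.rng (cyc.eq_path v.val)).trans (cyc.rng_path _ _)
    refine Subtype.ext ((cyc.eq_path v.val).trans ?_).symm
    simp only [hlen, hrng]
    exact congrArg (cyc.path · _) (add_sub_cancel_right _ _).symm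
  right_inv x := by
    simp only [cyc.rng_path, cyc.length_path, ZMod.natCast_val, ZMod.cast_id', id, sub_add_cancel]

def cycSucc : (graphN (cyc j) n).V ≃ (graphN (cyc j) n).V :=
  (cycEquiv j n).trans ((Equiv.addRight ((1 : ZMod j), (1 : ZMod n))).trans (cycEquiv j n).symm)

variable {j n}

theorem cycEquiv_r_cycOutEdge (v : (graphN (cyc j) n).V) :
    cycEquiv j n ((graphN (cyc j) n).r (cycOutEdge j n v)) = cycEquiv j n v + (1, 1) := by
  refine Prod.ext (graphN_r_rng _) ?_
  show (((graphN (cyc j) n).r (cycOutEdge j n v)).val.length : ZMod n) = v.val.length + 1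
  rw [graphN_r_length, ZMod.natCast_mod, Nat.cast_succ]
  rfl

theorem r_cycOutEdge (v : (graphN (cyc j) n).V) :
    (graphN (cyc j) n).r (cycOutEdge j n v) = cycSucc j n v :=
  (cycEquiv j n).eq_symm_apply.2 (cycEquiv_r_cycOutEdge v)

theorem existsUnique_r_eq_cyc (v : (graphN (cyc j) n).V) :
    ∃! f : (graphN (cyc j) n).E, (graphN (cyc j) n).r f = v := by
  refine ⟨cycOutEdge j n ((cycSucc j n).symm v),
    (r_cycOutEdge _).trans (Equiv.apply_symm_apply _ _), fun f hf => ?_⟩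
  rw [eq_cycOutEdge f, r_cycOutEdge] at hf
  rw [eq_cycOutEdge f, ← hf, Equiv.symm_apply_apply]

theorem semiconj_cycEquiv_cycSucc :
    Function.Semiconj (cycEquiv j n) (cycSucc j n) (· + ((1 : ZMod j), (1 : ZMod n))) :=
  fun _ => (cycEquiv j n).apply_symm_apply _

end graphN
end DirGraph

open DirGraph in
theorem stmt7_general (j nn : ℕ) (hn : 0 < nn) :
    (∀ v : (graphN (cyc j) nn).V, ∃! f : (graphN (cyc j) nn).E, (graphN (cyc j) nn).s f = v) ∧
    (∀ v : (graphN (cyc j) nn).V, ∃! f : (graphN (cyc j) nn).E, (graphN (cyc j) nn).r f = v) ∧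
    Nat.card (graphN (cyc j) nn).V = Nat.gcd j nn * Nat.lcm j nn ∧
    ∃ σ : (graphN (cyc j) nn).V ≃ (graphN (cyc j) nn).V,
      (∀ v, ∃ f : (graphN (cyc j) nn).E,
        (graphN (cyc j) nn).s f = v ∧ (graphN (cyc j) nn).r f = σ v) ∧
      (∀ v, (⇑σ)^[Nat.lcm j nn] v = v) ∧
      (∀ v t, 0 < t → t < Nat.lcm j nn → (⇑σ)^[t] v ≠ v) := by
  have : NeZero nn := ⟨hn.ne'⟩
  have hperiodic (t : ℕ) (v : (graphN (cyc j) nn).V) :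
      (graphN.cycSucc j nn)^[t] v = v ↔ t • ((1 : ZMod j), (1 : ZMod nn)) = 0 :=
    graphN.semiconj_cycEquiv_cycSucc.iterate_eq_self_iff_nsmul_eq_zero
      (graphN.cycEquiv j nn).injective t v
  have horder : addOrderOf ((1 : ZMod j), (1 : ZMod nn)) = Nat.lcm j nn := by
    rw [Prod.addOrderOf_mk, ZMod.addOrderOf_one, ZMod.addOrderOf_one]
  refine ⟨graphN.existsUnique_s_eq_cyc, graphN.existsUnique_r_eq_cyc, ?_, graphN.cycSucc j nn,
    fun v => ⟨graphN.cycOutEdge j nn v, rfl, graphN.r_cycOutEdge v⟩,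
    fun v => (hperiodic _ v).2 (horder ▸ addOrderOf_nsmul_eq_zero _),
    fun v t ht hlt =>
      (hperiodic t v).not.2 (nsmul_ne_zero_of_lt_addOrderOf ht.ne' (horder ▸ hlt))⟩
  rw [Nat.card_congr (graphN.cycEquiv j nn), Nat.card_prod, Nat.card_zmod, Nat.card_zmod,
    Nat.gcd_mul_lcm]

open DirGraph in
/-- For the simple cycle `C_j` and `n ≥ 1`, the graph
`C_j(n)` is a disjoint union of exactly `gcd(j,n)` simple loops, each of
length `p = lcm(j,n)`: every vertex has in- and out-degree exactly `1`, the
successor permutation `σ` has every orbit of exact (minimal) period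
`lcm(j,n)`, and the total number of vertices is `gcd(j,n) * lcm(j,n)`. -/
theorem stmt7 (j nn : ℕ) (hj : 0 < j) (hn : 0 < nn) :
    (∀ v : (graphN (cyc j) nn).V, ∃! f : (graphN (cyc j) nn).E, (graphN (cyc j) nn).s f = v) ∧
    (∀ v : (graphN (cyc j) nn).V, ∃! f : (graphN (cyc j) nn).E, (graphN (cyc j) nn).r f = v) ∧
    Nat.card (graphN (cyc j) nn).V = Nat.gcd j nn * Nat.lcm j nn ∧
    ∃ σ : (graphN (cyc j) nn).V ≃ (graphN (cyc j) nn).V,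
      (∀ v, ∃ f : (graphN (cyc j) nn).E,
        (graphN (cyc j) nn).s f = v ∧ (graphN (cyc j) nn).r f = σ v) ∧
      (∀ v, (⇑σ)^[Nat.lcm j nn] v = v) ∧
      (∀ v t, 0 < t → t < Nat.lcm j nn → (⇑σ)^[t] v ≠ v) :=
  stmt7_general j nn hn
end

section
/- The embedding map τ : E* → Y defined by τ(w) = (w₁, w₂, …, w_k, s(w_k), s(w_k), …) (where w = w₁⋯w_k is the mixed-radix decomposition of w and the tail consists of the constant vertex s(w_k)) is injective, and its image is dense in Y with respect to the product topology. -/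
namespace DirGraph

/-- `Xc G n i` is the (discrete) space `X_{i+1}` of paths in `G` of length
`< n (i+1)` whose length is divisible by `n i`. -/
abbrev Xc (G : DirGraph) (n : ℕ → ℕ) (i : ℕ) : Type :=
  {w : G.Path // w.length < n (i + 1) ∧ n i ∣ w.length}

instance (G : DirGraph) (n : ℕ → ℕ) (i : ℕ) : TopologicalSpace (Xc G n i) := ⊥

instance (G : DirGraph) (n : ℕ → ℕ) (i : ℕ) : DiscreteTopology (Xc G n i) := ⟨rfl⟩

/-- `Yt G n` is the `{n_k}`-compactification `Y` of `E*`: the composable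
sequences in `Π_i X_i`, with the product topology (each `X_i` discrete). -/
abbrev Yt (G : DirGraph) (n : ℕ → ℕ) : Type :=
  {y : ∀ i, Xc G n i // ∀ i, (y i).val.src = (y (i + 1)).val.rng}

/-- The `i`-th coordinate path of an element of `Y`. -/
def yc {G : DirGraph} {n : ℕ → ℕ} (y : Yt G n) (i : ℕ) : G.Path := (y.val i).val

/-- The domain `D_e = { y ∈ Y : r(y₁) = s(e) }` of the odometer map `σ_e`. -/
def De (G : DirGraph) (n : ℕ → ℕ) (e : G.E) : Set (Yt G n) :=
  {y | (yc y 0).rng = G.s e}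

/-- `Represents G n w y` says that `y ∈ Y` is the image `τ(w)` of the path
`w` under the canonical embedding: from some index `k` on the coordinates are
the trivial path at `s(w)`, and `w` is the concatenation `w₁ w₂ ⋯ w_k` of the
first `k` coordinates (the `k`-th walked first). -/
def Represents (G : DirGraph) (n : ℕ → ℕ) (w : G.Path) (y : Yt G n) : Prop :=
  ∃ k : ℕ,
    (∀ i, k ≤ i → (yc y i).edges = [] ∧ (yc y i).src = w.src) ∧
    w.edges = (((List.range k).map fun i => (yc y i).edges).reverse).flatten

/-- `Carry G n e y z i0` : `z = σ_e(y)` where `i0 = i(y) < ∞` is the least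
index with `|y_{i0}| < n_{i0+1} - n_{i0}`: the coordinates below `i0` of `z`
are the trivial path at `r(e)`, the `i0`-th is `e y₀ y₁ ⋯ y_{i0}`, and the
coordinates above `i0` are unchanged. -/
def Carry (G : DirGraph) (n : ℕ → ℕ) (e : G.E) (y z : Yt G n) (i0 : ℕ) : Prop :=
  (yc y i0).length < n (i0 + 1) - n i0 ∧
  (∀ i < i0, ¬ (yc y i).length < n (i + 1) - n i) ∧
  (∀ i < i0, (yc z i).edges = [] ∧ (yc z i).src = G.r e) ∧
  (yc z i0).src = (yc y i0).src ∧
  (yc z i0).edges =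
    (yc y i0).edges ++ (((List.range i0).map fun i => (yc y i).edges).reverse).flatten
      ++ [e] ∧
  ∀ i, i0 < i → yc z i = yc y i

/-- `OdRel G n e y z` : `z = σ_e(y)`, the graph of the odometer map `σ_e`:
either there is a least index `i0 = i(y)` and a carry happens there, or all
coordinates of `y` are maximal and `z = (r(e), r(e), …)`. -/
def OdRel (G : DirGraph) (n : ℕ → ℕ) (e : G.E) (y z : Yt G n) : Prop :=
  (∃ i0, Carry G n e y z i0) ∨
  ((∀ i, ¬ (yc y i).length < n (i + 1) - n i) ∧
    ∀ i, (yc z i).edges = [] ∧ (yc z i).src = G.r e)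

/-- A subset `B ⊆ Y` is invariant for the odometer maps `σ`. -/
def Invariant (G : DirGraph) (n : ℕ → ℕ) (σ : G.E → Yt G n → Yt G n)
    (B : Set (Yt G n)) : Prop :=
  (∀ e : G.E, ∀ y ∈ B ∩ De G n e, σ e y ∈ B) ∧
  (∀ y : Yt G n, (∃ f : G.E, ∃ z ∈ De G n f ∩ B, σ f z = y) → y ∈ B)

end DirGraph

section Aux

open DirGraph

variable {G : DirGraph} {n : ℕ → ℕ}

theorem myPathExt {p q : G.Path} (h1 : p.src = q.src) (h2 : p.edges = q.edges) : p = q := by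
  cases p; cases q
  cases h1; cases h2
  rfl

/-- The concatenation of the first `j` coordinates of `y`. -/
def Fl (y : Yt G n) (j : ℕ) : List G.E :=
  (((List.range j).map fun i => (yc y i).edges).reverse).flatten

theorem Fl_succ (y : Yt G n) (j : ℕ) : Fl y (j + 1) = (yc y j).edges ++ Fl y j := by
  simp [Fl, List.range_succ]

theorem dvd_le_sub {a b c : ℕ} (ha : 0 < a) (hab : a ∣ b) (hac : a ∣ c) (h : b < c) :
    b ≤ c - a := by
  have hd : a ∣ c - b := Nat.dvd_sub hac hab
  have : a ≤ c - b := Nat.le_of_dvd (by omega) hd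
  omega

theorem npos (h0 : n 0 = 1) (hmono : StrictMono n) (i : ℕ) : 0 < n i := by
  have := hmono.monotone (Nat.zero_le i)
  omega

theorem len_le (h0 : n 0 = 1) (hmono : StrictMono n) (hdvd : ∀ i, n i ∣ n (i + 1)) (y : Yt G n) (i : ℕ) : (yc y i).length ≤ n (i + 1) - n i :=
  dvd_le_sub (npos h0 hmono i) (y.val i).prop.2 (hdvd i) (y.val i).prop.1

theorem Fl_len_lt (h0 : n 0 = 1) (hmono : StrictMono n) (hdvd : ∀ i, n i ∣ n (i + 1)) (y : Yt G n) : ∀ j, (Fl y j).length < n j := by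
  intro j
  induction j with
  | zero => simpa [Fl] using npos h0 hmono 0
  | succ j ih =>
    rw [Fl_succ, List.length_append]
    have h1 := len_le h0 hmono hdvd y j
    have h2 : n j < n (j + 1) := hmono (by omega)
    have : (yc y j).edges.length = (yc y j).length := rfl
    omega

theorem Fl_cancel (h0 : n 0 = 1) (hmono : StrictMono n) (hdvd : ∀ i, n i ∣ n (i + 1)) (y z : Yt G n) (j : ℕ) (h : Fl y (j + 1) = Fl z (j + 1)) :
    (yc y j).edges = (yc z j).edges ∧ Fl y j = Fl z j := by
  rw [Fl_succ, Fl_succ] at h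
  have hly := Fl_len_lt h0 hmono hdvd y j
  have hlz := Fl_len_lt h0 hmono hdvd z j
  obtain ⟨a, ha⟩ := (y.val j).prop.2
  obtain ⟨b, hb⟩ := (z.val j).prop.2
  have ha' : (yc y j).edges.length = n j * a := ha
  have hb' : (yc z j).edges.length = n j * b := hb
  have hlen : (Fl y j).length = (Fl z j).length := by
    have hl := congrArg List.length h
    simp only [List.length_append, ha', hb'] at hl
    have e1 : (n j * a + (Fl y j).length) % n j = (Fl y j).length := by
      rw [Nat.mul_add_mod, Nat.mod_eq_of_lt hly]
    have e2 : (n j * b + (Fl z j).length) % n j = (Fl z j).length := by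
      rw [Nat.mul_add_mod, Nat.mod_eq_of_lt hlz]
    rw [← e1, ← e2, hl]
  exact List.append_inj' h hlen

theorem Fl_stable {w : G.Path} {y : Yt G n} {k : ℕ}
    (hk : ∀ i, k ≤ i → (yc y i).edges = [] ∧ (yc y i).src = w.src)
    (hek : w.edges = Fl y k) : ∀ j, k ≤ j → Fl y j = w.edges := by
  intro j hj
  induction j, hj using Nat.le_induction with
  | base => exact hek.symm
  | succ j hj ih => rw [Fl_succ, (hk j hj).1, List.nil_append, ih]

theorem rep_unique (h0 : n 0 = 1) (hmono : StrictMono n) (hdvd : ∀ i, n i ∣ n (i + 1)) {w : G.Path} {y z : Yt G n}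
    (hy : Represents G n w y) (hz : Represents G n w z) : y = z := by
  obtain ⟨k, hk, hek⟩ := hy
  obtain ⟨k', hk', hek'⟩ := hz
  set m := max k k' with hm
  have hFy := Fl_stable hk hek
  have hFz := Fl_stable hk' hek'
  have key : ∀ t, ∀ j, j + t = m → Fl y j = Fl z j := by
    intro t
    induction t with
    | zero =>
      intro j hj
      have hj' : j = m := by omega
      subst hj'
      rw [hFy m (le_max_left _ _), hFz m (le_max_right _ _)]
    | succ t ih =>
      intro j hj
      have h1 := ih (j + 1) (by omega)
      exact (Fl_cancel h0 hmono hdvd y z j h1).2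
  have edges_eq : ∀ i, (yc y i).edges = (yc z i).edges := by
    intro i
    rcases le_or_gt m i with h | h
    · rw [(hk i (le_trans (le_max_left _ _) h)).1,
        (hk' i (le_trans (le_max_right _ _) h)).1]
    · have h1 := key (m - (i + 1)) (i + 1) (by omega)
      exact (Fl_cancel h0 hmono hdvd y z i h1).1
  have wsrc : w.src = Path.src w := rfl
  have src_eq : ∀ d i, m ≤ i + d → (yc y i).src = (yc z i).src := by
    intro d
    induction d with
    | zero =>
      intro i hi
      rw [(hk i (by omega)).2, (hk' i (by omega)).2]
    | succ d ih =>
      intro i hi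
      rcases le_or_gt m i with h | h
      · rw [(hk i (by omega)).2, (hk' i (by omega)).2]
      · have h1 := ih (i + 1) (by omega)
        have h2 := edges_eq (i + 1)
        have ey : (yc y i).src = (yc y (i + 1)).rng := y.prop i
        have ez : (yc z i).src = (yc z (i + 1)).rng := z.prop i
        rw [ey, ez]
        show G.endAt (yc y (i + 1)).src (yc y (i + 1)).edges
          = G.endAt (yc z (i + 1)).src (yc z (i + 1)).edges
        rw [h1, h2]
  apply Subtype.ext
  funext i
  apply Subtype.ext
  exact myPathExt (src_eq m i (Nat.le_add_left m i)) (edges_eq i)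

theorem rep_inj {w w' : G.Path} {y : Yt G n}
    (hy : Represents G n w y) (hz : Represents G n w' y) : w = w' := by
  obtain ⟨k, hk, hek⟩ := hy
  obtain ⟨k', hk', hek'⟩ := hz
  have hFy := Fl_stable hk hek
  have hFz := Fl_stable hk' hek'
  apply myPathExt
  · rw [← (hk (max k k') (le_max_left _ _)).2, (hk' (max k k') (le_max_right _ _)).2]
  · rw [← hFy (max k k') (le_max_left _ _), hFz (max k k') (le_max_right _ _)]

theorem exists_w (y : Yt G n) (N : ℕ) :
    ∃ w : G.Path, w.src = (yc y N).src ∧ w.edges = Fl y (N + 1) := by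
  induction N with
  | zero =>
    refine ⟨yc y 0, rfl, ?_⟩
    rw [Fl_succ]
    simp [Fl]
  | succ N ih =>
    obtain ⟨w, hsrc, hedg⟩ := ih
    refine ⟨⟨(yc y (N + 1)).src, (yc y (N + 1)).edges ++ w.edges, ?_⟩, rfl, ?_⟩
    · apply isPathFrom_append _ _ _ (yc y (N + 1)).valid
      show G.IsPathFrom (yc y (N + 1)).rng w.edges
      have hp : (yc y N).src = (yc y (N + 1)).rng := y.prop N
      rw [← hp, ← hsrc]
      exact w.valid
    · show (yc y (N + 1)).edges ++ w.edges = Fl y (N + 2)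
      rw [Fl_succ, hedg]

/-- Modify `y` by replacing all coordinates above `N` with the trivial path. -/
def zext (h0 : n 0 = 1) (hmono : StrictMono n) (y : Yt G n) (N : ℕ) : Yt G n :=
  ⟨fun i =>
    if h : i ≤ N then y.val i
    else ⟨Path.nil (yc y N).src, npos h0 hmono (i + 1), dvd_zero _⟩,
   by
    intro i
    by_cases h1 : i + 1 ≤ N
    · simp only [dif_pos (by omega : i ≤ N), dif_pos h1]
      exact y.prop i
    · by_cases h2 : i ≤ N
      · have hiN : i = N := by omega
        subst hiN
        simp only [dif_pos h2, dif_neg h1]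
        rfl
      · simp only [dif_neg h2, dif_neg h1]
        rfl⟩

theorem zext_agree (h0 : n 0 = 1) (hmono : StrictMono n) (y : Yt G n) (N : ℕ) : ∀ i ≤ N, (zext h0 hmono y N).val i = y.val i := by
  intro i hi
  simp only [zext, dif_pos hi]

theorem dense_aux (h0 : n 0 = 1) (hmono : StrictMono n) (y : Yt G n) (N : ℕ) :
    ∃ w : G.Path, Represents G n w (zext h0 hmono y N) := by
  obtain ⟨w, hsrc, hedg⟩ := exists_w y N
  set z := zext h0 hmono y N with hz
  have hFz : Fl z (N + 1) = Fl y (N + 1) := by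
    unfold Fl
    congr 2
    apply List.map_congr_left
    intro a ha
    rw [List.mem_range] at ha
    show ((zext h0 hmono y N).val a).val.edges = _
    rw [zext_agree h0 hmono y N a (by omega)]
    rfl
  refine ⟨w, N + 1, ?_, ?_⟩
  · intro i hi
    have : ¬ i ≤ N := by omega
    show ((zext h0 hmono y N).val i).val.edges = [] ∧ ((zext h0 hmono y N).val i).val.src = w.src
    simp only [zext, dif_neg this]
    exact ⟨rfl, hsrc.symm⟩
  · show w.edges = Fl z (N + 1)
    rw [hFz, hedg]

end Aux

open DirGraph in
/-- The canonical embedding `τ : E* → Y` (characterized by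
`Represents`) is injective and has dense range in the `{n_k}`-compactification
`Y` with its product topology. -/
theorem stmt13 (G : DirGraph) [Fintype G.V] [Fintype G.E]
    (hnosource : ∀ v : G.V, ∃ e : G.E, G.r e = v)
    (hnosink : ∀ v : G.V, ∃ e : G.E, G.s e = v)
    (n : ℕ → ℕ) (h0 : n 0 = 1) (hmono : StrictMono n) (hdvd : ∀ i, n i ∣ n (i + 1))
    (τ : G.Path → Yt G n) (hτ : ∀ w, Represents G n w (τ w)) :
    Function.Injective τ ∧ DenseRange τ := by
  constructor
  · intro w w' h
    exact rep_inj (hτ w) (h ▸ hτ w')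
  · intro y
    rw [mem_closure_iff]
    intro o ho hyo
    obtain ⟨V, hV, rfl⟩ := isOpen_induced_iff.mp ho
    obtain ⟨I, u, hu, hsub⟩ := isOpen_pi_iff.mp hV y.val hyo
    set N := I.sup id with hN
    obtain ⟨w, hrep⟩ := dense_aux h0 hmono y N
    have hτw : τ w = zext h0 hmono y N := rep_unique h0 hmono hdvd (hτ w) hrep
    refine ⟨τ w, ?_, Set.mem_range_self w⟩
    apply hsub
    intro i hi
    have hiN : i ≤ N := Finset.le_sup (f := id) hi
    rw [hτw, zext_agree h0 hmono y N i hiN]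
    exact (hu i hi).2
end

section
/- For each edge e ∈ E¹ the odometer map σ_e : D_e → R_e is continuous, where D_e = { y ∈ Y : r(y₁) = s(e) } and σ_e is defined by carrying: if i(w) < ∞ is the least i with |w_i| < n_i − n_{i−1}, then σ_e(w)_i = r(e) for i < i(w), σ_e(w)_{i(w)} = e w₁ w₂ ⋯ w_{i(w)}, and σ_e(w)_i = w_i for i > i(w); if i(w) = ∞ then σ_e(w) = (r(e), r(e), …). -/
namespace DirGraph

theorem Path.ext' {G : DirGraph} {p q : G.Path} (hs : p.src = q.src)
    (he : p.edges = q.edges) : p = q := by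
  cases p; cases q; cases hs; cases he; rfl

theorem yc_eq {G : DirGraph} {n : ℕ → ℕ} {y y' : Yt G n} {i : ℕ}
    (h : y.val i = y'.val i) : yc y i = yc y' i := congrArg Subtype.val h

theorem xc_ext {G : DirGraph} {n : ℕ → ℕ} {y y' : Yt G n} {i : ℕ}
    (hs : (yc y i).src = (yc y' i).src) (he : (yc y i).edges = (yc y' i).edges) :
    y.val i = y'.val i := Subtype.ext (Path.ext' hs he)

theorem carry_coord {G : DirGraph} {n : ℕ → ℕ} {e : G.E} {y y' z z' : Yt G n}
    {i0 j : ℕ} (hc : Carry G n e y z i0) (hc' : OdRel G n e y' z')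
    (hag : ∀ i, i ≤ max i0 j → y'.val i = y.val i) : z'.val j = z.val j := by
  have hagy : ∀ i, i ≤ max i0 j → yc y' i = yc y i := fun i hi => yc_eq (hag i hi)
  rcases hc' with ⟨i0', hc'⟩ | ⟨hmax', _⟩
  · -- carry case for y'; show i0' = i0
    have hi0 : i0' = i0 := by
      rcases lt_trichotomy i0' i0 with h | h | h
      · exfalso
        have := hc.2.1 i0' h
        rw [← hagy i0' (le_trans (le_of_lt h) (le_max_left _ _))] at this
        exact this hc'.1
      · exact h
      · exfalso
        have := hc'.2.1 i0 h
        rw [hagy i0 (le_max_left _ _)] at this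
        exact this hc.1
    subst hi0
    rcases lt_trichotomy j i0' with h | h | h
    · exact xc_ext
        ((hc'.2.2.1 j h).2.trans (hc.2.2.1 j h).2.symm)
        ((hc'.2.2.1 j h).1.trans (hc.2.2.1 j h).1.symm)
    · subst h
      refine xc_ext ?_ ?_
      · rw [hc'.2.2.2.1, hc.2.2.2.1, hagy j (le_max_left _ _)]
      · rw [hc'.2.2.2.2.1, hc.2.2.2.2.1, hagy j (le_max_left _ _)]
        congr 2
        exact congrArg (fun l => l.reverse.flatten) <| List.map_congr_left fun i hi =>
          congrArg Path.edges
            (hagy i (le_trans (le_of_lt (List.mem_range.mp hi)) (le_max_left _ _)))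
    · have h1 : yc z' j = yc y' j := hc'.2.2.2.2.2 j h
      have h2 : yc z j = yc y j := hc.2.2.2.2.2 j h
      refine xc_ext ?_ ?_
      · rw [h1, h2, hagy j (le_max_right _ _)]
      · rw [h1, h2, hagy j (le_max_right _ _)]
  · -- all-max case for y' is impossible since y'_{i0} is small
    exfalso
    have := hmax' i0
    rw [hagy i0 (le_max_left _ _)] at this
    exact this hc.1

theorem allmax_coord {G : DirGraph} {n : ℕ → ℕ} {e : G.E} {y y' z z' : Yt G n}
    {j : ℕ} (hmax : ∀ i, ¬ (yc y i).length < n (i + 1) - n i)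
    (hz : ∀ i, (yc z i).edges = [] ∧ (yc z i).src = G.r e)
    (hc' : OdRel G n e y' z')
    (hag : ∀ i, i ≤ j → y'.val i = y.val i) : z'.val j = z.val j := by
  have hagy : ∀ i, i ≤ j → yc y' i = yc y i := fun i hi => yc_eq (hag i hi)
  have hzj : (yc z' j).edges = [] ∧ (yc z' j).src = G.r e := by
    rcases hc' with ⟨i0', hc'⟩ | ⟨_, hz'⟩
    · have hji : j < i0' := by
        by_contra hle
        have := hmax i0'
        rw [← hagy i0' (le_of_not_gt hle)] at this
        exact this hc'.1
      exact hc'.2.2.1 j hji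
    · exact hz' j
  exact xc_ext (hzj.2.trans (hz j).2.symm) (hzj.1.trans (hz j).1.symm)

end DirGraph

open DirGraph in
/-- Each odometer map `σ_e` (any map satisfying its defining
clauses `OdRel` on `D_e`) is continuous on `D_e`. -/
theorem stmt14 (G : DirGraph) [Fintype G.V] [Fintype G.E]
    (hnosource : ∀ v : G.V, ∃ e : G.E, G.r e = v)
    (hnosink : ∀ v : G.V, ∃ e : G.E, G.s e = v)
    (n : ℕ → ℕ) (h0 : n 0 = 1) (hmono : StrictMono n) (hdvd : ∀ i, n i ∣ n (i + 1))
    (e : G.E) (σ : Yt G n → Yt G n)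
    (hσ : ∀ y ∈ De G n e, OdRel G n e y (σ y)) :
    ContinuousOn σ (De G n e) := by
  intro y hy
  rw [ContinuousWithinAt]
  refine Topology.IsEmbedding.subtypeVal.tendsto_nhds_iff.mpr (tendsto_pi_nhds.mpr fun j => ?_)
  rw [nhds_discrete, Filter.tendsto_pure]
  -- choose M according to the case of `OdRel` at `y`
  obtain ⟨M, hM⟩ : ∃ M, ∀ y' : Yt G n, y' ∈ De G n e →
      (∀ i, i ≤ M → y'.val i = y.val i) → (σ y').val j = (σ y).val j := by
    rcases hσ y hy with ⟨i0, hc⟩ | ⟨hmax, hz⟩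
    · exact ⟨max i0 j, fun y' hy' hag => carry_coord hc (hσ y' hy') hag⟩
    · exact ⟨j, fun y' hy' hag => allmax_coord hmax hz (hσ y' hy') hag⟩
  have hUopen : IsOpen (⋂ i ∈ Finset.Iic M, {y' : Yt G n | y'.val i = y.val i}) := by
    refine isOpen_biInter_finset fun i _ => ?_
    exact (isOpen_discrete {(y.val i)}).preimage
      ((continuous_apply i).comp continuous_subtype_val)
  have hyU : y ∈ ⋂ i ∈ Finset.Iic M, {y' : Yt G n | y'.val i = y.val i} :=
    Set.mem_iInter₂.mpr fun i _ => rfl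
  have h1 : ∀ᶠ y' in nhdsWithin y (De G n e),
      y' ∈ ⋂ i ∈ Finset.Iic M, {y' : Yt G n | y'.val i = y.val i} :=
    Filter.Eventually.filter_mono nhdsWithin_le_nhds (hUopen.mem_nhds hyU)
  filter_upwards [self_mem_nhdsWithin, h1] with y' hy' hU'
  exact hM y' hy' fun i hi => Set.mem_iInter₂.mp hU' i (Finset.mem_Iic.mpr hi)
end

section
/- The set R_e = σ_e(D_e) is closed in Y: if a sequence in R_e converges in Y, its limit lies in R_e. Explicitly, R_e is the disjoint union of the clopen sets R_m = { y ∈ Y : y_i = r(e) for i < m, and y_m = ew' for some w' with |w'| ≡ −1 (mod n_{m−1}) } for m < ∞ together with the singleton R_∞ = {(r(e), r(e), …)}, and any limit point of R_e either lies in some R_m or equals (r(e), r(e), …). -/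
namespace DirGraph

/-- The clopen piece `R_m` of `R_e`: coordinates below `m` are the trivial
path at `r(e)`, and the `m`-th coordinate is `e w'` with
`|w'| ≡ −1 (mod n_{m-1})` (`e` the last edge walked). -/
def RsetM (G : DirGraph) (n : ℕ → ℕ) (e : G.E) (m : ℕ) : Set (Yt G n) :=
  {y | (∀ i < m, (yc y i).edges = [] ∧ (yc y i).src = G.r e) ∧
    ∃ l : List G.E, (yc y m).edges = l ++ [e] ∧ n m ∣ l.length + 1}

/-- The singleton `R_∞ = {(r(e), r(e), …)}`. -/
def Rinf (G : DirGraph) (n : ℕ → ℕ) (e : G.E) : Set (Yt G n) :=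
  {y | ∀ i, (yc y i).edges = [] ∧ (yc y i).src = G.r e}

end DirGraph

/-!
A point `σ_e(y)` arises from a carry at the first non-maximal coordinate `m` of `y`, so it lies
in `R_m`, or from the maximal point when there is none, so it lies in `R_∞`. Conversely, a point
of `R_m` with `m`-th coordinate `w'e` is `σ_e(y)` for the `y` obtained by cutting `w'` at the
positions `|w'| + 1 - n_i`, `i ≤ m`, and `R_∞` is hit by any sequence of maximal blocks ending
at `s(e)`, which exists because `G` has no sources. Each `R_m` depends on finitely many
coordinates, hence is clopen, and `R_e = ⋂_k (R_0 ∪ ⋯ ∪ R_{k-1} ∪ N_k)`, where `N_k` is the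
clopen set of points whose first `k` coordinates are the vertex `r(e)`; so `R_e` is closed.
-/

theorem List.drop_take_append_drop_of_le {α : Type*} (l : List α) {a c : ℕ} (h : a ≤ c) :
    (l.take c).drop a ++ l.drop c = l.drop a := by
  conv_rhs => rw [← List.drop_take_append_drop l a (c - a), Nat.add_sub_cancel' h]
  rw [List.drop_take]

namespace DirGraph

variable {G : DirGraph}

attribute [ext] Path

theorem isPathFrom_take :
    ∀ (l : List G.E) (k : ℕ) (x : G.V), G.IsPathFrom x l → G.IsPathFrom x (l.take k)
  | [], k, _, _ => by cases k <;> trivial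
  | _ :: _, 0, _, _ => trivial
  | e :: es, k + 1, _, h => ⟨h.1, isPathFrom_take es k (G.r e) h.2⟩

namespace Path

def take (p : G.Path) (k : ℕ) : G.Path :=
  ⟨p.src, p.edges.take k, isPathFrom_take p.edges k p.src p.valid⟩

def drop (p : G.Path) (k : ℕ) : G.Path :=
  ⟨G.endAt p.src (p.edges.take k), p.edges.drop k, isPathFrom_take_drop p.edges k p.src p.valid⟩

theorem drop_rng (p : G.Path) (k : ℕ) : (p.drop k).rng = p.rng := by
  show G.endAt (G.endAt p.src (p.edges.take k)) (p.edges.drop k) = G.endAt p.src p.edges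
  rw [← endAt_append, List.take_append_drop]

theorem s_eq_endAt_of_edges_eq_append {p : G.Path} {l : List G.E} {e : G.E}
    (h : p.edges = l ++ [e]) : G.s e = G.endAt p.src l := by
  have hvalid := isPathFrom_take_drop p.edges l.length p.src p.valid
  rw [h, List.take_left' rfl, List.drop_left' rfl] at hvalid
  exact hvalid.1

theorem exists_length_rng (hnosource : ∀ v : G.V, ∃ e : G.E, G.r e = v) :
    ∀ (L : ℕ) (v : G.V), ∃ p : G.Path, p.length = L ∧ p.rng = v
  | 0, v => ⟨nil v, rfl, rfl⟩
  | L + 1, v => by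
    obtain ⟨f, hf⟩ := hnosource v
    obtain ⟨p, hlen, hrng⟩ := exists_length_rng hnosource L (G.s f)
    refine ⟨p.cons f hrng.symm, by simp [hlen], ?_⟩
    show G.endAt p.src (p.edges ++ [f]) = v
    rw [endAt_append]
    exact hf

theorem exists_seq_length_rng (hnosource : ∀ v : G.V, ∃ e : G.E, G.r e = v) (L : ℕ → ℕ)
    (v : G.V) : ∃ p : ℕ → G.Path,
      (∀ i, (p i).length = L i) ∧ (p 0).rng = v ∧ ∀ i, (p (i + 1)).rng = (p i).src := by
  choose q hlen hrng using exists_length_rng hnosource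
  let w : ℕ → G.V := fun i => Nat.rec v (fun i x => (q (L i) x).src) i
  exact ⟨fun i => q (L i) (w i), fun i => hlen _ _, hrng _ _, fun i => hrng _ _⟩

/-- `p` cut at the positions `b 0 ≥ b 1 ≥ ⋯`; block `i + 1` is walked just before block `i`. -/
def slices (p : G.Path) (b : ℕ → ℕ) (i : ℕ) : G.Path :=
  (p.take (b i)).drop (b (i + 1))

variable (p : G.Path) {b : ℕ → ℕ}

theorem slices_src {i : ℕ} (hb : b (i + 1) ≤ b i) :
    (p.slices b i).src = G.endAt p.src (p.edges.take (b (i + 1))) := by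
  simp only [slices, drop, take, List.take_take, min_eq_left hb]

theorem slices_rng_succ {i : ℕ} (hb : b (i + 1) ≤ b i) :
    (p.slices b (i + 1)).rng = (p.slices b i).src := by
  rw [slices, drop_rng, slices_src p hb]
  rfl

theorem slices_rng_zero (hb : p.length ≤ b 0) : (p.slices b 0).rng = p.rng := by
  rw [slices, drop_rng]
  show G.endAt p.src (p.edges.take (b 0)) = G.endAt p.src p.edges
  rw [List.take_of_length_le hb]

theorem slices_length {i : ℕ} (hb : b i ≤ p.length) : (p.slices b i).length = b i - b (i + 1) := by
  simp only [slices, drop, take, length, List.length_drop, List.length_take]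
  rw [min_eq_left (show b i ≤ p.edges.length from hb)]

theorem flatten_slices (hb : Antitone b) (hb0 : p.length ≤ b 0) (j : ℕ) :
    (((List.range j).map fun i => (p.slices b i).edges).reverse).flatten = p.edges.drop (b j) := by
  induction j with
  | zero => exact (List.drop_of_length_le hb0).symm
  | succ j ih =>
    simp only [List.range_succ, List.map_append, List.map_cons, List.map_nil,
      List.reverse_append, List.reverse_cons, List.reverse_nil, List.nil_append,
      List.flatten_append, List.flatten_cons, List.flatten_nil, List.append_nil, ih]
    exact List.drop_take_append_drop_of_le p.edges (hb j.le_succ)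

end Path

section Compactification

variable {n : ℕ → ℕ}

theorem Path.length_slices_cut (q : G.Path) (hmono : Monotone n) (hpos : 0 < n 0) {m i : ℕ}
    (hm : n m ≤ q.length + 1) (hi : i ≤ m) :
    (q.slices (fun j => q.length + 1 - n j) i).length = min (n (i + 1)) (q.length + 1) - n i := by
  have := hmono (Nat.zero_le i)
  have := hmono hi
  rw [slices_length _ (by omega)]
  omega

theorem Path.exists_blocks (q : G.Path) (h0 : n 0 = 1) (hmono : Monotone n) {m : ℕ}
    (hnm : n m ≤ q.length + 1) (hlt : q.length + 1 < n (m + 1)) : ∃ p : ℕ → G.Path,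
      (∀ i < m, (p i).length = n (i + 1) - n i) ∧ (p m).length = q.length + 1 - n m ∧
      (p 0).rng = q.rng ∧ (∀ i < m, (p i).src = (p (i + 1)).rng) ∧ (p m).src = q.src ∧
      (p m).edges ++ (((List.range m).map fun i => (p i).edges).reverse).flatten = q.edges := by
  let b : ℕ → ℕ := fun j => q.length + 1 - n j
  have hb : Antitone b := fun i j hij => Nat.sub_le_sub_left (hmono hij) _
  have hb0 : q.length ≤ b 0 := by
    show q.length ≤ q.length + 1 - n 0
    omega
  have hbm : b (m + 1) = 0 := Nat.sub_eq_zero_of_le hlt.le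
  have hlen : ∀ i ≤ m, (q.slices b i).length = min (n (i + 1)) (q.length + 1) - n i :=
    fun i hi => q.length_slices_cut hmono (h0 ▸ one_pos) hnm hi
  refine ⟨q.slices b, fun i hi => ?_, ?_, q.slices_rng_zero hb0,
    fun i _ => (q.slices_rng_succ (hb i.le_succ)).symm, ?_, ?_⟩
  · rw [hlen i hi.le, min_eq_left ((hmono hi).trans hnm)]
  · rw [hlen m le_rfl, min_eq_right hlt.le]
  · rw [slices_src _ (hb m.le_succ), hbm, List.take_zero]
    rfl
  · rw [q.flatten_slices hb hb0]
    show (q.edges.take (b m)).drop (b (m + 1)) ++ q.edges.drop (b m) = _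
    rw [hbm, List.drop_zero, List.take_append_drop]

theorem Yt.ext {y z : Yt G n} (h : ∀ i, yc y i = yc z i) : y = z :=
  Subtype.ext (funext fun i => Subtype.ext (h i))

theorem Yt.exists_splice (z : Yt G n) (m : ℕ) (p : ℕ → G.Path)
    (hmem : ∀ i ≤ m, (p i).length < n (i + 1) ∧ n i ∣ (p i).length)
    (hcomp : ∀ i < m, (p i).src = (p (i + 1)).rng) (htop : (p m).src = (yc z (m + 1)).rng) :
    ∃ y : Yt G n, (∀ i ≤ m, yc y i = p i) ∧ ∀ i, m < i → yc y i = yc z i := by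
  let f : ∀ i, Xc G n i := fun i => if h : i ≤ m then ⟨p i, hmem i h⟩ else z.val i
  have hlow : ∀ i ≤ m, (f i).val = p i := fun i hi => by simp only [f, dif_pos hi]
  have hhigh : ∀ i, m < i → (f i).val = yc z i := fun i hi => by
    simp only [f, dif_neg (not_le.2 hi)]
    rfl
  refine ⟨⟨f, fun i => ?_⟩, hlow, hhigh⟩
  rcases lt_trichotomy i m with hi | rfl | hi
  · rw [hlow i hi.le, hlow (i + 1) hi]
    exact hcomp i hi
  · rw [hlow i le_rfl, hhigh (i + 1) i.lt_succ_self]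
    exact htop
  · rw [hhigh i hi, hhigh (i + 1) (hi.trans i.lt_succ_self)]
    exact z.prop i

theorem isClopen_setOf_coord (i : ℕ) (S : Set (Xc G n i)) : IsClopen {y : Yt G n | y.val i ∈ S} :=
  (isClopen_discrete S).preimage ((continuous_apply i).comp continuous_subtype_val)

def nilBelow (G : DirGraph) (n : ℕ → ℕ) (v : G.V) (k : ℕ) : Set (Yt G n) :=
  {y | ∀ i < k, (yc y i).edges = [] ∧ (yc y i).src = v}

theorem isClopen_nilBelow (v : G.V) (k : ℕ) : IsClopen (nilBelow G n v k) := by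
  have h : nilBelow G n v k = ⋂ i ∈ Set.Iio k,
      {y : Yt G n | y.val i ∈ {x : Xc G n i | x.val.edges = [] ∧ x.val.src = v}} := by
    ext y
    simp only [nilBelow, Set.mem_iInter, Set.mem_Iio, Set.mem_ofPred_eq]
    rfl
  rw [h]
  exact (Set.finite_Iio k).isClopen_biInter fun i _ => isClopen_setOf_coord i _

end Compactification

section Range

variable {n : ℕ → ℕ} {e : G.E}

theorem rsetM_eq_nilBelow_inter (m : ℕ) : RsetM G n e m = nilBelow G n (G.r e) m ∩
    {y | ∃ l : List G.E, (yc y m).edges = l ++ [e] ∧ n m ∣ l.length + 1} :=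
  rfl

theorem isClopen_rsetM (m : ℕ) : IsClopen (RsetM G n e m) := by
  rw [rsetM_eq_nilBelow_inter]
  exact (isClopen_nilBelow _ m).inter (isClopen_setOf_coord m
    {x | ∃ l : List G.E, x.val.edges = l ++ [e] ∧ n m ∣ l.length + 1})

theorem edges_ne_nil_of_mem_rsetM {m : ℕ} {y : Yt G n} (hy : y ∈ RsetM G n e m) :
    (yc y m).edges ≠ [] := by
  obtain ⟨-, l, hl, -⟩ := hy
  simp [hl]

open Function in
theorem pairwise_disjoint_rsetM : Pairwise (Disjoint on RsetM G n e) :=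
  (pairwise_disjoint_on _).2 fun m _ hlt => Set.disjoint_left.2 fun _ hy hy' =>
    edges_ne_nil_of_mem_rsetM hy (hy'.1 m hlt).1

theorem disjoint_rsetM_rinf (m : ℕ) : Disjoint (RsetM G n e m) (Rinf G n e) :=
  Set.disjoint_left.2 fun _ hy hy' => edges_ne_nil_of_mem_rsetM hy (hy' m).1

theorem iUnion_rsetM_union_rinf_eq_iInter : (⋃ m, RsetM G n e m) ∪ Rinf G n e =
    ⋂ k, ((⋃ m ∈ Finset.range k, RsetM G n e m) ∪ nilBelow G n (G.r e) k) := by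
  ext y
  simp only [Set.mem_union, Set.mem_iUnion, Set.mem_iInter, Finset.mem_range, exists_prop]
  constructor
  · rintro (⟨m, hm⟩ | hinf) k
    · by_cases hmk : m < k
      · exact Or.inl ⟨m, hmk, hm⟩
      · exact Or.inr fun i hi => hm.1 i (by omega)
    · exact Or.inr fun i _ => hinf i
  · intro hy
    by_cases hinf : y ∈ Rinf G n e
    · exact Or.inr hinf
    obtain ⟨i, hi⟩ := not_forall.1 hinf
    rcases hy (i + 1) with ⟨m, -, hm⟩ | hnil
    · exact Or.inl ⟨m, hm⟩
    · exact absurd (hnil i i.lt_succ_self) hi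

theorem isClosed_iUnion_rsetM_union_rinf : IsClosed ((⋃ m, RsetM G n e m) ∪ Rinf G n e) := by
  rw [iUnion_rsetM_union_rinf_eq_iInter]
  exact isClosed_iInter fun k => (isClosed_biUnion_finset fun m _ =>
    (isClopen_rsetM m).isClosed).union (isClopen_nilBelow _ k).isClosed

theorem Carry.mem_rsetM {y z : Yt G n} {m : ℕ} (h : Carry G n e y z m) : z ∈ RsetM G n e m := by
  obtain ⟨-, -, hnil, -, hedges, -⟩ := h
  refine ⟨hnil, _, hedges, ?_⟩
  have hdvd : n m ∣ (yc z m).length := (z.val m).prop.2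
  rwa [Path.length, hedges, List.length_append, List.length_singleton] at hdvd

theorem OdRel.mem_iUnion_rsetM_union_rinf {y z : Yt G n} (h : OdRel G n e y z) :
    z ∈ (⋃ m, RsetM G n e m) ∪ Rinf G n e := by
  rcases h with ⟨m, hcarry⟩ | ⟨-, hnil⟩
  · exact Or.inl (Set.mem_iUnion.2 ⟨m, hcarry.mem_rsetM⟩)
  · exact Or.inr hnil

theorem Carry.unique {y z z' : Yt G n} {m m' : ℕ} (h : Carry G n e y z m)
    (h' : Carry G n e y z' m') : z = z' := by
  obtain rfl : m = m' := le_antisymm (le_of_not_gt fun hlt => h.2.1 m' hlt h'.1)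
    (le_of_not_gt fun hlt => h'.2.1 m hlt h.1)
  obtain ⟨-, -, hnil, hsrc, hedges, habove⟩ := h
  obtain ⟨-, -, hnil', hsrc', hedges', habove'⟩ := h'
  refine Yt.ext fun i => ?_
  rcases lt_trichotomy i m with hi | rfl | hi
  · exact Path.ext ((hnil i hi).2.trans (hnil' i hi).2.symm)
      ((hnil i hi).1.trans (hnil' i hi).1.symm)
  · exact Path.ext (hsrc.trans hsrc'.symm) (hedges.trans hedges'.symm)
  · exact (habove i hi).trans (habove' i hi).symm

theorem OdRel.unique {y z z' : Yt G n} (h : OdRel G n e y z) (h' : OdRel G n e y z') : z = z' := by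
  rcases h with ⟨m, hcarry⟩ | ⟨hmax, hnil⟩ <;> rcases h' with ⟨m', hcarry'⟩ | ⟨hmax', hnil'⟩
  · exact hcarry.unique hcarry'
  · exact absurd hcarry.1 (hmax' m)
  · exact absurd hcarry'.1 (hmax m')
  · exact Yt.ext fun i => Path.ext ((hnil i).2.trans (hnil' i).2.symm)
      ((hnil i).1.trans (hnil' i).1.symm)

theorem exists_odRel_of_mem_rinf (hnosource : ∀ v : G.V, ∃ e : G.E, G.r e = v) (hpos : 0 < n 0)
    (hmono : StrictMono n) (hdvd : ∀ i, n i ∣ n (i + 1)) {z : Yt G n} (hz : z ∈ Rinf G n e) :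
    ∃ y ∈ De G n e, OdRel G n e y z := by
  obtain ⟨p, hlen, hrng0, hrng⟩ :=
    Path.exists_seq_length_rng hnosource (fun i => n (i + 1) - n i) (G.s e)
  have hmem : ∀ i, (p i).length < n (i + 1) ∧ n i ∣ (p i).length := fun i => by
    have : n 0 ≤ n i := hmono.monotone i.zero_le
    have : n i < n (i + 1) := hmono (by omega)
    rw [hlen i]
    exact ⟨by omega, Nat.dvd_sub (hdvd i) dvd_rfl⟩
  refine ⟨⟨fun i => ⟨p i, hmem i⟩, fun i => (hrng i).symm⟩, hrng0, Or.inr ⟨fun i => ?_, hz⟩⟩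
  show ¬ (p i).length < n (i + 1) - n i
  rw [hlen i]
  exact lt_irrefl _

theorem exists_carry_of_mem_rsetM (h0 : n 0 = 1) (hmono : StrictMono n)
    (hdvd : ∀ i, n i ∣ n (i + 1)) {m : ℕ} {z : Yt G n} (hz : z ∈ RsetM G n e m) :
    ∃ y ∈ De G n e, Carry G n e y z m := by
  obtain ⟨hnil, l, hl, hdvdm⟩ := hz
  let q := (yc z m).take l.length
  have hq : q.edges = l := by simp [q, Path.take, hl]
  have hqlen : q.length = l.length := congrArg List.length hq
  have hlt : l.length + 1 < n (m + 1) := by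
    have h : (yc z m).length < n (m + 1) := (z.val m).prop.1
    rwa [Path.length, hl, List.length_append, List.length_singleton] at h
  have hnm : n m ≤ l.length + 1 := Nat.le_of_dvd l.length.succ_pos hdvdm
  obtain ⟨p, hlow, htop, hrng0, hcomp, hsrc, hedges⟩ :=
    q.exists_blocks h0 hmono.monotone (hqlen ▸ hnm) (hqlen ▸ hlt)
  have hmem : ∀ i ≤ m, (p i).length < n (i + 1) ∧ n i ∣ (p i).length := by
    intro i hi
    rcases hi.lt_or_eq with hi | rfl
    · have : n 0 ≤ n i := hmono.monotone i.zero_le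
      have : n i < n (i + 1) := hmono (by omega)
      rw [hlow i hi]
      exact ⟨by omega, Nat.dvd_sub (hdvd i) dvd_rfl⟩
    · rw [htop, hqlen]
      exact ⟨by omega, Nat.dvd_sub hdvdm dvd_rfl⟩
  obtain ⟨y, hy, hyz⟩ := Yt.exists_splice z m p hmem hcomp (hsrc.trans (z.prop m))
  refine ⟨y, ?_, ?_, fun i hi => ?_, hnil, by rw [hy m le_rfl, hsrc]; rfl, ?_,
    fun i hi => (hyz i hi).symm⟩
  · show (yc y 0).rng = G.s e
    rw [hy 0 m.zero_le, hrng0, Path.s_eq_endAt_of_edges_eq_append hl, ← hq]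
    rfl
  · rw [hy m le_rfl, htop, hqlen]
    omega
  · rw [hy i hi.le, hlow i hi]
    exact lt_irrefl _
  · have hblocks : ((List.range m).map fun i => (yc y i).edges) =
        (List.range m).map fun i => (p i).edges :=
      List.map_congr_left fun i hi => by rw [hy i (List.mem_range.1 hi).le]
    rw [hy m le_rfl, hblocks, hedges, hq, hl]

theorem image_eq_setOf_odRel {σ : Yt G n → Yt G n} (hσ : ∀ y ∈ De G n e, OdRel G n e y (σ y)) :
    σ '' De G n e = {z | ∃ y ∈ De G n e, OdRel G n e y z} := by
  ext z
  exact ⟨fun ⟨y, hy, hz⟩ => ⟨y, hy, hz ▸ hσ y hy⟩,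
    fun ⟨y, hy, hyz⟩ => ⟨y, hy, (hσ y hy).unique hyz⟩⟩

theorem setOf_odRel_eq (hnosource : ∀ v : G.V, ∃ e : G.E, G.r e = v) (h0 : n 0 = 1)
    (hmono : StrictMono n) (hdvd : ∀ i, n i ∣ n (i + 1)) :
    {z | ∃ y ∈ De G n e, OdRel G n e y z} = (⋃ m, RsetM G n e m) ∪ Rinf G n e := by
  refine Set.Subset.antisymm (fun z ⟨_, _, hyz⟩ => hyz.mem_iUnion_rsetM_union_rinf) ?_
  rintro z (hz | hz)
  · obtain ⟨m, hm⟩ := Set.mem_iUnion.1 hz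
    obtain ⟨y, hy, hcarry⟩ := exists_carry_of_mem_rsetM h0 hmono hdvd hm
    exact ⟨y, hy, Or.inl ⟨m, hcarry⟩⟩
  · exact exists_odRel_of_mem_rinf hnosource (h0 ▸ one_pos) hmono hdvd hz

end Range

end DirGraph

open DirGraph in
theorem stmt15_general (G : DirGraph)
    (hnosource : ∀ v : G.V, ∃ e : G.E, G.r e = v)
    (n : ℕ → ℕ) (h0 : n 0 = 1) (hmono : StrictMono n) (hdvd : ∀ i, n i ∣ n (i + 1))
    (e : G.E) (σ : Yt G n → Yt G n)
    (hσ : ∀ y ∈ De G n e, OdRel G n e y (σ y)) :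
    IsClosed (σ '' De G n e) ∧
    σ '' De G n e = (⋃ m, RsetM G n e m) ∪ Rinf G n e ∧
    (∀ m, IsClopen (RsetM G n e m)) ∧
    (∀ m m', m ≠ m' → Disjoint (RsetM G n e m) (RsetM G n e m')) ∧
    (∀ m, Disjoint (RsetM G n e m) (Rinf G n e)) := by
  have himage : σ '' De G n e = (⋃ m, RsetM G n e m) ∪ Rinf G n e :=
    (image_eq_setOf_odRel hσ).trans (setOf_odRel_eq hnosource h0 hmono hdvd)
  exact ⟨himage ▸ isClosed_iUnion_rsetM_union_rinf, himage, isClopen_rsetM,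
    fun _ _ h => pairwise_disjoint_rsetM h, disjoint_rsetM_rinf⟩

open DirGraph in
/-- The range `R_e = σ_e(D_e)` is closed in `Y`; explicitly
it is the disjoint union of the clopen sets `R_m` together with the singleton
`R_∞ = {(r(e), r(e), …)}`. -/
theorem stmt15 (G : DirGraph) [Fintype G.V] [Fintype G.E]
    (hnosource : ∀ v : G.V, ∃ e : G.E, G.r e = v)
    (hnosink : ∀ v : G.V, ∃ e : G.E, G.s e = v)
    (n : ℕ → ℕ) (h0 : n 0 = 1) (hmono : StrictMono n) (hdvd : ∀ i, n i ∣ n (i + 1))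
    (e : G.E) (σ : Yt G n → Yt G n)
    (hσ : ∀ y ∈ De G n e, OdRel G n e y (σ y)) :
    IsClosed (σ '' De G n e) ∧
    σ '' De G n e = (⋃ m, RsetM G n e m) ∪ Rinf G n e ∧
    (∀ m, IsClopen (RsetM G n e m)) ∧
    (∀ m m', m ≠ m' → Disjoint (RsetM G n e m) (RsetM G n e m')) ∧
    (∀ m, Disjoint (RsetM G n e m) (Rinf G n e)) :=
  stmt15_general G hnosource n h0 hmono hdvd e σ hσ
end

section
/- The topological graph E(∞) contains no loops: there is no finite sequence of edges f₁,…,f_k in E(∞)¹ (k ≥ 1) with r(f_i) = s(f_{i+1}) for i < k and r(f_k) = s(f₁). Equivalently, no composition σ_{e₁} ∘ σ_{e₂} ∘ ⋯ ∘ σ_{e_k} of odometer maps (k ≥ 1) has a fixed point in Y. -/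
/-!
Measure `y ∈ Y` modulo `n m` by the length of the path `y₀ y₁ ⋯ y_{m-1}`. An odometer map `σ_e`
either lengthens this prefix by exactly one edge, or (when the carry passes index `m`) resets it
from its maximal length `n m - 1` to the empty path; either way its residue mod `n m` goes up
by one. Hence a loop of `k` edges in `E(∞)` has `n m ∣ k` for every `m`, impossible as
`n m → ∞`.
-/

lemma List.length_flatten_reverse_map_range {α : Type*} (f : ℕ → List α) (k : ℕ) :
    (((List.range k).map f).reverse.flatten).length = ∑ i ∈ Finset.range k, (f i).length := by
  simp [List.length_flatten, Finset.sum, Multiset.range, Function.comp_def]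

lemma List.modEq_getLast_of_isChain {α : Type*} {d : ℕ} (g h : α → ℕ) :
    ∀ (l : List α) (hne : l ≠ []), (∀ p ∈ l, h p ≡ g p + 1 [MOD d]) →
      l.IsChain (fun p q => h p = g q) → h (l.getLast hne) ≡ g (l.head hne) + l.length [MOD d]
  | [p], _, hstep, _ => by simpa using hstep p (by simp)
  | p :: q :: t, _, hstep, hchain => by
    obtain ⟨hpq, hrest⟩ := List.isChain_cons_cons.mp hchain
    have ih := List.modEq_getLast_of_isChain g h (q :: t) (List.cons_ne_nil q t)
      (fun r hr => hstep r (List.mem_cons_of_mem p hr)) hrest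
    calc h ((p :: q :: t).getLast _) = h ((q :: t).getLast (List.cons_ne_nil q t)) := rfl
      _ ≡ h p + (t.length + 1) [MOD d] := by simpa [← hpq] using ih
      _ ≡ g p + 1 + (t.length + 1) [MOD d] := (hstep p (by simp)).add_right _
      _ = g p + (p :: q :: t).length := by simp only [List.length_cons]; ring

namespace DirGraph

variable {G : DirGraph} {n : ℕ → ℕ}

lemma Path.length_eq_zero_of_edges_eq_nil {p : G.Path} (h : p.edges = []) : p.length = 0 := by
  simp [Path.length, h]

lemma yc_length_le (hdvd : ∀ i, n i ∣ n (i + 1)) (y : Yt G n) (i : ℕ) :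
    (yc y i).length ≤ n (i + 1) - n i := by
  obtain ⟨hlt, hdvd_len⟩ : (yc y i).length < n (i + 1) ∧ n i ∣ (yc y i).length := (y.val i).prop
  have hdvd_sub : n i ∣ n (i + 1) - n i := Nat.dvd_sub (hdvd i) dvd_rfl
  exact Nat.le_of_lt_add_of_dvd (by omega) hdvd_len hdvd_sub

def prefixLength (y : Yt G n) (m : ℕ) : ℕ := ∑ i ∈ Finset.range m, (yc y i).length

lemma prefixLength_eq_zero {z : Yt G n} {m : ℕ} (hz : ∀ i < m, (yc z i).edges = []) :
    prefixLength z m = 0 :=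
  Finset.sum_eq_zero fun i hi =>
    Path.length_eq_zero_of_edges_eq_nil (hz i (Finset.mem_range.mp hi))

lemma prefixLength_of_maximal (hmono : Monotone n) (hdvd : ∀ i, n i ∣ n (i + 1))
    {y : Yt G n} {m : ℕ} (hmax : ∀ i < m, ¬ (yc y i).length < n (i + 1) - n i) :
    prefixLength y m = n m - n 0 := by
  rw [prefixLength, ← Finset.sum_range_tsub hmono]
  refine Finset.sum_congr rfl fun i hi => ?_
  exact (yc_length_le hdvd y i).antisymm (not_lt.mp (hmax i (Finset.mem_range.mp hi)))

lemma prefixLength_modEq_of_maximal_of_edges_eq_nil (h0 : n 0 = 1) (hmono : StrictMono n)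
    (hdvd : ∀ i, n i ∣ n (i + 1)) {y z : Yt G n} {m : ℕ}
    (hmax : ∀ i < m, ¬ (yc y i).length < n (i + 1) - n i) (hz : ∀ i < m, (yc z i).edges = []) :
    prefixLength z m ≡ prefixLength y m + 1 [MOD n m] := by
  have hpos : 0 < n m := h0 ▸ Nat.one_pos |>.trans_le (hmono.monotone (Nat.zero_le m))
  rw [prefixLength_eq_zero hz, prefixLength_of_maximal hmono.monotone hdvd hmax, h0,
    Nat.sub_add_cancel hpos]
  exact (Nat.modEq_zero_iff_dvd.mpr dvd_rfl).symm

lemma prefixLength_of_carry_lt {e : G.E} {y z : Yt G n} {i₀ m : ℕ} (hcarry : Carry G n e y z i₀)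
    (hm : i₀ < m) : prefixLength z m = prefixLength y m + 1 := by
  obtain ⟨-, -, hzbelow, -, hzi₀, habove⟩ := hcarry
  have hz_init : prefixLength z (i₀ + 1) = prefixLength y (i₀ + 1) + 1 := by
    have hzi₀_len : (yc z i₀).length = (yc y i₀).length + prefixLength y i₀ + 1 := by
      change (yc z i₀).edges.length = _
      rw [hzi₀, List.length_append, List.length_append, List.length_flatten_reverse_map_range]
      rfl
    rw [prefixLength, Finset.sum_range_succ, ← prefixLength, prefixLength_eq_zero
      fun i hi => (hzbelow i hi).1, hzi₀_len, prefixLength, prefixLength, Finset.sum_range_succ]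
    ring
  have htail : ∑ i ∈ Finset.Ico (i₀ + 1) m, (yc z i).length
      = ∑ i ∈ Finset.Ico (i₀ + 1) m, (yc y i).length :=
    Finset.sum_congr rfl fun i hi => by rw [habove i (Finset.mem_Ico.mp hi).1]
  rw [prefixLength, prefixLength, ← Finset.sum_range_add_sum_Ico _ hm,
    ← Finset.sum_range_add_sum_Ico _ hm, ← prefixLength, ← prefixLength, hz_init, htail]
  ring

lemma prefixLength_modEq_of_odRel (h0 : n 0 = 1) (hmono : StrictMono n)
    (hdvd : ∀ i, n i ∣ n (i + 1)) {e : G.E} {y z : Yt G n} (hod : OdRel G n e y z) (m : ℕ) :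
    prefixLength z m ≡ prefixLength y m + 1 [MOD n m] := by
  rcases hod with ⟨i₀, hcarry⟩ | ⟨hmax, hz⟩
  · rcases lt_or_ge i₀ m with hm | hm
    · rw [prefixLength_of_carry_lt hcarry hm]
    · obtain ⟨-, hmax, hz, -⟩ := hcarry
      exact prefixLength_modEq_of_maximal_of_edges_eq_nil h0 hmono hdvd
        (fun i hi => hmax i (hi.trans_le hm)) fun i hi => (hz i (hi.trans_le hm)).1
  · exact prefixLength_modEq_of_maximal_of_edges_eq_nil h0 hmono hdvd
      (fun i _ => hmax i) fun i _ => (hz i).1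

end DirGraph

open DirGraph in
theorem stmt17_general (G : DirGraph)
    (n : ℕ → ℕ) (h0 : n 0 = 1) (hmono : StrictMono n) (hdvd : ∀ i, n i ∣ n (i + 1))
    (σ : G.E → Yt G n → Yt G n)
    (hσ : ∀ (e : G.E), ∀ y ∈ De G n e, OdRel G n e y (σ e y)) :
    ¬ ∃ l : List (G.E × Yt G n), l ≠ [] ∧
      (∀ p ∈ l, p.2 ∈ De G n p.1) ∧
      List.Chain' (fun p q => σ p.1 p.2 = q.2) l ∧
      (∀ p q, l.getLast? = some p → l.head? = some q → σ p.1 p.2 = q.2) := by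
  rintro ⟨l, hne, hDe, hchain, hcyc⟩
  have hloop : σ (l.getLast hne).1 (l.getLast hne).2 = (l.head hne).2 :=
    hcyc _ _ (List.getLast?_eq_some_getLast hne) (List.head?_eq_some_head hne)
  have hdvd_length (m : ℕ) : n m ∣ l.length := by
    have h := List.modEq_getLast_of_isChain (fun p => prefixLength p.2 m)
      (fun p => prefixLength (σ p.1 p.2) m) l hne
      (fun p hp => prefixLength_modEq_of_odRel h0 hmono hdvd (hσ p.1 p.2 (hDe p hp)) m)
      ((show l.IsChain _ from hchain).imp fun p q hpq => congrArg (prefixLength · m) hpq)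
    rw [hloop] at h
    exact Nat.left_modEq_add_iff.mp h
  have := Nat.le_of_dvd (List.length_pos_iff.mpr hne) (hdvd_length (l.length + 1))
  have := hmono.le_apply (x := l.length + 1)
  omega

open DirGraph in
/-- The topological graph `E(∞)` has no loops: there is no
nonempty finite list of edges `(eᵢ, ωᵢ)` (with `ωᵢ ∈ D_{eᵢ}`) such that
`σ_{eᵢ}(ωᵢ) = ω_{i+1}` cyclically; equivalently no composition of odometer
maps has a fixed point in `Y`. -/
theorem stmt17 (G : DirGraph) [Fintype G.V] [Fintype G.E]
    (hnosource : ∀ v : G.V, ∃ e : G.E, G.r e = v)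
    (hnosink : ∀ v : G.V, ∃ e : G.E, G.s e = v)
    (n : ℕ → ℕ) (h0 : n 0 = 1) (hmono : StrictMono n) (hdvd : ∀ i, n i ∣ n (i + 1))
    (σ : G.E → Yt G n → Yt G n)
    (hσ : ∀ (e : G.E), ∀ y ∈ De G n e, OdRel G n e y (σ e y)) :
    ¬ ∃ l : List (G.E × Yt G n), l ≠ [] ∧
      (∀ p ∈ l, p.2 ∈ De G n p.1) ∧
      List.Chain' (fun p q => σ p.1 p.2 = q.2) l ∧
      (∀ p q, l.getLast? = some p → l.head? = some q → σ p.1 p.2 = q.2) :=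
  stmt17_general G n h0 hmono hdvd σ hσ
end
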